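/- Let κ : S¹ → (0, ∞) be C¹, let κ* ∈ ℝ, and suppose the open set V = {θ : κ(θ) > κ*} is a disjoint union of open intervals each of length at most π. Then ∫₀^{2π}(−κ'(θ)² + κ(θ)²) dθ ≤ 2κ* ∫₀^{2π} κ(θ) dθ. -/

import Mathlib

/-!
Write the integrand minus `2 κ* κ` as `G = (κ - κ*)² - κ'² - κ*²`. By periodicity we may integrate
over `[t, t + 2π]` for a point `t` with `κ t ≤ κ*`. Off `V = {κ > κ*}` we have `0 < κ ≤ κ*`,
so `G ≤ 0`. Each component `(a, b)` of `V` inside `(t, t + 2π)` has `κ a = κ b = κ*` and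
`b - a ≤ π`, so Wirtinger's inequality `∫ (κ - κ*)² ≤ ∫ κ'²` gives `∫ₐᵇ G ≤ 0`. Wirtinger's
inequality itself comes from the Picone identity with the Riccati solution `w = l tan (l (x - m))`,
`l < 1`, and letting `l → 1`.
-/

open Function Real Set Filter Topology MeasureTheory intervalIntegral

theorem Function.Periodic.deriv {𝕜 F : Type*} [NontriviallyNormedField 𝕜]
    [NormedAddCommGroup F] [NormedSpace 𝕜 F] {f : 𝕜 → F} {c : 𝕜} (h : Periodic f c) :
    Periodic (deriv f) c := fun x ↦ by
  rw [← deriv_comp_add_const, show (fun y ↦ f (y + c)) = f from funext h]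

theorem hasDerivAt_mul_tan_mul_sub {l m x : ℝ} (hx : l * (x - m) ∈ Ioo (-(π / 2)) (π / 2)) :
    HasDerivAt (fun y ↦ l * tan (l * (y - m))) (l ^ 2 + (l * tan (l * (x - m))) ^ 2) x := by
  have hcos : cos (l * (x - m)) ≠ 0 := (cos_pos_of_mem_Ioo hx).ne'
  have hinner : HasDerivAt (fun y ↦ l * (y - m)) l x := by
    simpa using ((hasDerivAt_id x).sub_const m).const_mul l
  refine (((hasDerivAt_tan_of_mem_Ioo hx).comp x hinner).const_mul l).congr_deriv ?_
  rw [tan_eq_sin_div_cos]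
  field_simp
  linear_combination (-l ^ 2) * sin_sq_add_cos_sq (l * (x - m))

theorem mul_integral_sq_le_integral_deriv_sq_of_riccati {F w : ℝ → ℝ} {a b c : ℝ}
    (hF : ContDiff ℝ 1 F) (hab : a ≤ b) (ha : F a = 0) (hb : F b = 0)
    (hw : ∀ x ∈ Icc a b, HasDerivAt w (c + w x ^ 2) x) :
    c * ∫ x in a..b, F x ^ 2 ≤ ∫ x in a..b, deriv F x ^ 2 := by
  -- `(F' + F w)² = F'² - c F² + (F² w)'`, and `(F² w)'` integrates to `0` as `F a = F b = 0`
  rw [← uIcc_of_le hab] at hw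
  set D : ℝ → ℝ := fun x ↦ 2 * F x * deriv F x * w x + F x ^ 2 * (c + w x ^ 2)
  have hFc : Continuous F := hF.continuous
  have hF'c : Continuous (deriv F) := hF.continuous_deriv le_rfl
  have hwc : ContinuousOn w (uIcc a b) := fun x hx ↦ (hw x hx).continuousAt.continuousWithinAt
  have hD : ∀ x ∈ uIcc a b, HasDerivAt (fun y ↦ F y ^ 2 * w y) (D x) x := fun x hx ↦ by
    refine (((hF.differentiable one_ne_zero x).hasDerivAt.pow 2).mul (hw x hx)).congr_deriv ?_
    simp only [D, Pi.pow_apply]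
    ring
  have hDint : IntervalIntegrable D volume a b := by
    apply ContinuousOn.intervalIntegrable
    simp only [D]
    fun_prop
  have hDzero : ∫ x in a..b, D x = 0 := by
    simp [integral_eq_sub_of_hasDerivAt hD hDint, ha, hb]
  have hsq : ∀ x, (deriv F x + F x * w x) ^ 2 = deriv F x ^ 2 - c * F x ^ 2 + D x := fun x ↦ by
    simp only [D]
    ring
  have hF2 : IntervalIntegrable (fun x ↦ F x ^ 2) volume a b :=
    (hFc.pow 2).intervalIntegrable a b
  have hF'2 : IntervalIntegrable (fun x ↦ deriv F x ^ 2) volume a b :=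
    (hF'c.pow 2).intervalIntegrable a b
  have hnonneg : 0 ≤ ∫ x in a..b, (deriv F x + F x * w x) ^ 2 :=
    integral_nonneg hab fun x _ ↦ sq_nonneg _
  rw [funext hsq, integral_add (hF'2.sub (hF2.const_mul c)) hDint, hDzero,
    integral_sub hF'2 (hF2.const_mul c), intervalIntegral.integral_const_mul] at hnonneg
  linarith

theorem integral_sq_le_integral_deriv_sq {F : ℝ → ℝ} {a b : ℝ} (hF : ContDiff ℝ 1 F)
    (hab : a ≤ b) (hba : b - a ≤ π) (ha : F a = 0) (hb : F b = 0) :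
    ∫ x in a..b, F x ^ 2 ≤ ∫ x in a..b, deriv F x ^ 2 := by
  -- for `l < 1` the Riccati solution `l tan (l (x - m))` has no pole on `[a, b]`
  have hl : ∀ l ∈ Ioo (0 : ℝ) 1,
      l ^ 2 * ∫ x in a..b, F x ^ 2 ≤ ∫ x in a..b, deriv F x ^ 2 := by
    rintro l ⟨hl0, hl1⟩
    refine mul_integral_sq_le_integral_deriv_sq_of_riccati hF hab ha hb fun x hx ↦
      hasDerivAt_mul_tan_mul_sub (m := (a + b) / 2) ⟨?_, ?_⟩ <;>
      nlinarith [hx.1, hx.2, pi_pos]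
  have hlim : Tendsto (fun l : ℝ ↦ l ^ 2 * ∫ x in a..b, F x ^ 2) (𝓝[<] 1)
      (𝓝 (∫ x in a..b, F x ^ 2)) := by
    have hcont : Continuous fun l : ℝ ↦ l ^ 2 * ∫ x in a..b, F x ^ 2 := by fun_prop
    simpa using (hcont.tendsto 1).mono_left nhdsWithin_le_nhds
  exact le_of_tendsto hlim (eventually_of_mem (Ioo_mem_nhdsLT zero_lt_one) hl)

theorem IsOpen.exists_connectedComponentIn_eq_Ioo {U : Set ℝ} (hU : IsOpen U) {s t x : ℝ}
    (hUst : U ⊆ Icc s t) (hx : x ∈ U) :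
    ∃ a b, s ≤ a ∧ b ≤ t ∧ connectedComponentIn U x = Ioo a b ∧ a ∉ U ∧ b ∉ U := by
  set K := connectedComponentIn U x
  have hKU : K ⊆ U := connectedComponentIn_subset U x
  have hKne : K.Nonempty := ⟨x, mem_connectedComponentIn hx⟩
  have hbelow : BddBelow K := bddBelow_Icc.mono (hKU.trans hUst)
  have habove : BddAbove K := bddAbove_Icc.mono (hKU.trans hUst)
  have hlt : ∀ y ∈ K, sInf K < y ∧ y < sSup K := fun y hy ↦ by
    obtain ⟨ε, hε, hball⟩ := Metric.isOpen_iff.1 hU.connectedComponentIn y hy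
    rw [Real.ball_eq_Ioo] at hball
    have hleft : y - ε / 2 ∈ K := hball ⟨by linarith, by linarith⟩
    have hright : y + ε / 2 ∈ K := hball ⟨by linarith, by linarith⟩
    exact ⟨(csInf_le hbelow hleft).trans_lt (by linarith),
      (le_csSup habove hright).trans_lt' (by linarith)⟩
  have hK : K = Ioo (sInf K) (sSup K) := Subset.antisymm hlt
    ((isConnected_connectedComponentIn_iff.2 hx).Ioo_csInf_csSup_subset hbelow habove)
  -- the component through a point of `closure K ∩ U` meets `K`, hence is `K`
  have hclosure : ∀ y ∈ closure K, y ∈ U → y ∈ K := fun y hy hyU ↦ by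
    obtain ⟨z, hzy, hzK⟩ := mem_closure_iff.1 hy _ hU.connectedComponentIn
      (mem_connectedComponentIn hyU)
    change y ∈ connectedComponentIn U x
    rw [connectedComponentIn_eq hzK, ← connectedComponentIn_eq hzy]
    exact mem_connectedComponentIn hyU
  refine ⟨sInf K, sSup K, le_csInf hKne fun y hy ↦ (hUst (hKU hy)).1,
    csSup_le hKne fun y hy ↦ (hUst (hKU hy)).2, hK, fun h ↦ ?_, fun h ↦ ?_⟩
  · exact lt_irrefl _ (hlt _ (hclosure _ (csInf_mem_closure hKne hbelow) h)).1
  · exact lt_irrefl _ (hlt _ (hclosure _ (csSup_mem_closure hKne habove) h)).2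

theorem setIntegral_nonpos_of_forall_component {f : ℝ → ℝ} {U : Set ℝ} {s t : ℝ}
    (hU : IsOpen U) (hUst : U ⊆ Icc s t) (hf : IntegrableOn f U)
    (hcomp : ∀ a b, s ≤ a → a < b → b ≤ t → Ioo a b ⊆ U → a ∉ U → b ∉ U →
      ∫ x in a..b, f x ≤ 0) :
    ∫ x in U, f x ≤ 0 := by
  let ι := connectedComponentIn U '' U
  have hdisj : Pairwise (Disjoint on fun C : ι ↦ (C : Set ℝ)) := by
    intro C D hne
    obtain ⟨x, -, hx⟩ := C.2
    obtain ⟨y, -, hy⟩ := D.2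
    refine disjoint_left.2 fun z (hzC : z ∈ (C : Set ℝ)) (hzD : z ∈ (D : Set ℝ)) ↦
      hne (Subtype.ext ?_)
    rw [← hx, ← hy] at *
    rw [connectedComponentIn_eq hzC, connectedComponentIn_eq hzD]
  have hopen : ∀ C : ι, IsOpen (C : Set ℝ) := by
    rintro ⟨_, x, -, rfl⟩
    exact hU.connectedComponentIn
  have : Countable ι := hdisj.countable_of_isOpen_disjoint hopen <| by
    rintro ⟨_, x, hx, rfl⟩
    exact ⟨x, mem_connectedComponentIn hx⟩
  have hUnion : (⋃ C : ι, (C : Set ℝ)) = U := by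
    rw [← sUnion_eq_iUnion, sUnion_image]
    exact Subset.antisymm (iUnion₂_subset fun x _ ↦ connectedComponentIn_subset U x)
      fun x hx ↦ mem_biUnion hx (mem_connectedComponentIn hx)
  rw [← hUnion, integral_iUnion (fun C ↦ (hopen C).measurableSet) hdisj (hUnion ▸ hf)]
  refine tsum_nonpos ?_
  rintro ⟨_, x, hx, rfl⟩
  obtain ⟨a, b, hsa, hbt, hK, ha, hb⟩ := hU.exists_connectedComponentIn_eq_Ioo hUst hx
  have hab : a < b := by
    have := hK ▸ mem_connectedComponentIn hx
    exact this.1.trans this.2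
  have hIoo : Ioo a b ⊆ U := hK ▸ connectedComponentIn_subset U x
  simp only [hK, ← integral_Ioc_eq_integral_Ioo, ← integral_of_le hab.le]
  exact hcomp a b hsa hab hbt hIoo ha hb

theorem intervalIntegral_nonpos_of_forall_component {f : ℝ → ℝ} {U : Set ℝ} {s t : ℝ}
    (hst : s ≤ t) (hU : IsOpen U) (hUst : U ⊆ Ioo s t) (hf : IntervalIntegrable f volume s t)
    (hout : ∀ x ∈ Ioo s t, x ∉ U → f x ≤ 0)
    (hcomp : ∀ a b, s ≤ a → a < b → b ≤ t → Ioo a b ⊆ U → a ∉ U → b ∉ U →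
      ∫ x in a..b, f x ≤ 0) :
    ∫ x in s..t, f x ≤ 0 := by
  have hUst' : U ⊆ Ioc s t := hUst.trans Ioo_subset_Ioc_self
  have hfU : IntervalIntegrable (U.indicator f) volume s t :=
    (intervalIntegrable_iff_integrableOn_Ioc_of_le hst).2 (hf.1.indicator hU.measurableSet)
  calc ∫ x in s..t, f x ≤ ∫ x in s..t, U.indicator f x :=
        integral_mono_on_of_le_Ioo hst hf hfU fun x hx ↦ by
          by_cases hxU : x ∈ U
          · simp [hxU]
          · simp [hxU, hout x hx hxU]
    _ = ∫ x in U, f x := by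
        rw [integral_of_le hst, setIntegral_indicator hU.measurableSet, inter_eq_right.2 hUst']
    _ ≤ 0 := setIntegral_nonpos_of_forall_component hU (hUst.trans Ioo_subset_Icc_self)
        (hf.1.mono_set hUst') hcomp

theorem integral_neg_deriv_sq_add_sq_sub_two_mul_nonpos {κ : ℝ → ℝ} {k a b : ℝ}
    (hκ : ContDiff ℝ 1 κ) (hab : a ≤ b) (hba : b - a ≤ π) (ha : κ a = k) (hb : κ b = k) :
    ∫ θ in a..b, (-deriv κ θ ^ 2 + κ θ ^ 2 - 2 * k * κ θ) ≤ 0 := by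
  have hκc : Continuous κ := hκ.continuous
  have hκ'c : Continuous (deriv κ) := hκ.continuous_deriv le_rfl
  have hW := integral_sq_le_integral_deriv_sq (hκ.sub contDiff_const) hab hba
    (sub_eq_zero.2 ha) (sub_eq_zero.2 hb)
  simp only [deriv_sub_const] at hW
  calc ∫ θ in a..b, (-deriv κ θ ^ 2 + κ θ ^ 2 - 2 * k * κ θ)
      ≤ ∫ θ in a..b, ((κ θ - k) ^ 2 - deriv κ θ ^ 2) :=
        integral_mono_on hab (Continuous.intervalIntegrable (by fun_prop) _ _)
          (Continuous.intervalIntegrable (by fun_prop) _ _) fun θ _ ↦ by nlinarith [sq_nonneg k]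
    _ = (∫ θ in a..b, (κ θ - k) ^ 2) - ∫ θ in a..b, deriv κ θ ^ 2 :=
        intervalIntegral.integral_sub (Continuous.intervalIntegrable (by fun_prop) _ _)
          (Continuous.intervalIntegrable (by fun_prop) _ _)
    _ ≤ 0 := sub_nonpos.2 hW

theorem integral_neg_deriv_sq_add_sq_sub_two_mul_nonpos_of_le {κ : ℝ → ℝ} {k s u : ℝ}
    (hκ : ContDiff ℝ 1 κ) (hsu : s ≤ u) (hκ0 : ∀ θ ∈ Ioo s u, 0 ≤ κ θ)
    (hs : κ s ≤ k) (hu : κ u ≤ k)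
    (hcomp : ∀ a b, Ioo a b ⊆ {θ | k < κ θ} → b - a ≤ π) :
    ∫ θ in s..u, (-deriv κ θ ^ 2 + κ θ ^ 2 - 2 * k * κ θ) ≤ 0 := by
  have hκc : Continuous κ := hκ.continuous
  have hκ'c : Continuous (deriv κ) := hκ.continuous_deriv le_rfl
  set U := {θ | k < κ θ} ∩ Ioo s u
  have hle : ∀ θ ∈ Icc s u, θ ∉ U → κ θ ≤ k := fun θ hθ hθU ↦ by
    by_contra! hθk
    rcases hθ.1.eq_or_lt with rfl | h₁
    · exact hθk.not_ge hs
    rcases hθ.2.eq_or_lt with rfl | h₂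
    · exact hθk.not_ge hu
    exact hθU ⟨hθk, h₁, h₂⟩
  refine intervalIntegral_nonpos_of_forall_component (U := U) hsu
    ((isOpen_lt continuous_const hκc).inter isOpen_Ioo) inter_subset_right
    (Continuous.intervalIntegrable (by fun_prop) _ _) (fun θ hθ hθU ↦ ?_)
    fun a b hsa hab hbu hIoo ha hb ↦ ?_
  · nlinarith [hle θ (Ioo_subset_Icc_self hθ) hθU, hκ0 θ hθ, sq_nonneg (deriv κ θ)]
  · have hIcc : Icc a b ⊆ {θ | k ≤ κ θ} := by
      rw [← closure_Ioo hab.ne]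
      exact (isClosed_le continuous_const hκc).closure_subset_iff.2
        fun θ hθ ↦ show k ≤ κ θ from (hIoo hθ).1.le
    exact integral_neg_deriv_sq_add_sq_sub_two_mul_nonpos hκ hab.le
      (hcomp a b (hIoo.trans inter_subset_left))
      ((hle a ⟨hsa, by linarith⟩ ha).antisymm (hIcc (left_mem_Icc.2 hab.le)))
      ((hle b ⟨by linarith, hbu⟩ hb).antisymm (hIcc (right_mem_Icc.2 hab.le)))

theorem stmt_11 (κ : ℝ → ℝ) (κstar : ℝ)
    (hκ : ContDiff ℝ 1 κ) (hper : Function.Periodic κ (2 * π))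
    (hpos : ∀ θ, 0 < κ θ)
    (hcomp : ∀ a b : ℝ, Set.Ioo a b ⊆ {θ | κstar < κ θ} → b - a ≤ π) :
    ∫ θ in (0:ℝ)..(2 * π), (-(deriv κ θ) ^ 2 + κ θ ^ 2) ≤
      2 * κstar * ∫ θ in (0:ℝ)..(2 * π), κ θ := by
  have hκc : Continuous κ := hκ.continuous
  have hκ'c : Continuous (deriv κ) := hκ.continuous_deriv le_rfl
  obtain ⟨t, ht⟩ : ∃ t, κ t ≤ κstar := by
    by_contra! h
    linarith [hcomp 0 4 fun θ _ ↦ h θ, pi_lt_d2]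
  have hG : ∫ θ in t..t + 2 * π, (-deriv κ θ ^ 2 + κ θ ^ 2 - 2 * κstar * κ θ) ≤ 0 :=
    integral_neg_deriv_sq_add_sq_sub_two_mul_nonpos_of_le hκ (by linarith [pi_pos])
      (fun θ _ ↦ (hpos θ).le) ht (hper t ▸ ht) hcomp
  have hGper : Periodic (fun θ ↦ -deriv κ θ ^ 2 + κ θ ^ 2 - 2 * κstar * κ θ) (2 * π) :=
    fun θ ↦ by simp only [hper θ, hper.deriv θ]
  rw [hGper.intervalIntegral_add_eq t 0, zero_add, intervalIntegral.integral_sub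
    (Continuous.intervalIntegrable (by fun_prop) _ _)
    (Continuous.intervalIntegrable (by fun_prop) _ _), intervalIntegral.integral_const_mul] at hG
  linarith
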